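/- For a subset I ⊂ {1,...,n}, let δ_I : FΩ_k → FΩ_{k+1} be the linear map sending ω to Σ_{i ∈ I \ ω} ω ∪ {i}, and φ : FΩ_{k+1} → FΩ_k the boundary map ω ↦ Σ_{j ∈ ω} ω\{j}. Suppose y ∈ FΩ_k is such that every subset in supp(y) meets I in exactly h elements, and |I| = m. Then (y)δ_I φ = (y)φ δ_I − (2h − m)·y. -/
import Mathlib


/-- The unsigned boundary map `φ`. -/
noncomputable def phi (n : ℕ) (F : Type) [Field F] :
    (Finset (Fin n) →₀ F) →ₗ[F] (Finset (Fin n) →₀ F) :=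
  Finsupp.lsum F fun ω =>
    (LinearMap.id : F →ₗ[F] F).smulRight (∑ j ∈ ω, Finsupp.single (ω.erase j) (1 : F))

/-- The partial coboundary map `δ_I`, sending `ω` to `Σ_{i ∈ I \ ω} ω ∪ {i}`. -/
noncomputable def deltaI (n : ℕ) (F : Type) [Field F] (I : Finset (Fin n)) :
    (Finset (Fin n) →₀ F) →ₗ[F] (Finset (Fin n) →₀ F) :=
  Finsupp.lsum F fun ω =>
    (LinearMap.id : F →ₗ[F] F).smulRight (∑ i ∈ I \ ω, Finsupp.single (insert i ω) (1 : F))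

lemma phi_single (n : ℕ) (F : Type) [Field F] (T : Finset (Fin n)) (c : F) :
    phi n F (Finsupp.single T c) = ∑ j ∈ T, Finsupp.single (T.erase j) c := by
  rw [phi, Finsupp.lsum_single]
  simp [LinearMap.smulRight_apply, Finset.smul_sum, Finsupp.smul_single]

lemma delta_single (n : ℕ) (F : Type) [Field F] (I : Finset (Fin n)) (T : Finset (Fin n)) (c : F) :
    deltaI n F I (Finsupp.single T c) = ∑ i ∈ I \ T, Finsupp.single (insert i T) c := by
  rw [deltaI, Finsupp.lsum_single]
  simp [LinearMap.smulRight_apply, Finset.smul_sum, Finsupp.smul_single]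

lemma key (n : ℕ) (F : Type) [Field F] (I : Finset (Fin n)) (h m : ℕ) (hI : I.card = m)
    (S : Finset (Fin n)) (c : F) (hS : (S ∩ I).card = h) :
    phi n F (deltaI n F I (Finsupp.single S c)) =
      deltaI n F I (phi n F (Finsupp.single S c))
        - (2 * (h : ℤ) - (m : ℤ)) • Finsupp.single S c := by
  set z := Finsupp.single S c with hz
  have hhm : h ≤ m := by
    rw [← hS, ← hI]; exact Finset.card_le_card Finset.inter_subset_right
  have hcard : (I \ S).card = m - h := by
    have := Finset.card_sdiff_add_card_inter I S
    rw [Finset.inter_comm, hS, hI] at this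
    omega
  have hL : phi n F (deltaI n F I z) =
      (I \ S).card • z + ∑ i ∈ I \ S, ∑ j ∈ S, Finsupp.single (insert i (S.erase j)) c := by
    rw [hz, delta_single, map_sum]
    have key1 : ∀ i ∈ I \ S, phi n F (Finsupp.single (insert i S) c)
        = z + ∑ j ∈ S, Finsupp.single (insert i (S.erase j)) c := by
      intro i hi
      have hiS : i ∉ S := (Finset.mem_sdiff.mp hi).2
      rw [phi_single, Finset.sum_insert hiS, Finset.erase_insert hiS]
      congr 1
      refine Finset.sum_congr rfl fun j hj => ?_
      have hij : i ≠ j := fun e => hiS (by rw [e]; exact hj)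
      rw [Finset.erase_insert_of_ne hij]
    rw [Finset.sum_congr rfl key1, Finset.sum_add_distrib, Finset.sum_const]
  have hR : deltaI n F I (phi n F z) =
      h • z + ∑ j ∈ S, ∑ i ∈ I \ S, Finsupp.single (insert i (S.erase j)) c := by
    rw [hz, phi_single, map_sum]
    have key2 : ∀ j ∈ S, deltaI n F I (Finsupp.single (S.erase j) c)
        = (if j ∈ I then z else 0) + ∑ i ∈ I \ S, Finsupp.single (insert i (S.erase j)) c := by
      intro j hj
      rw [delta_single]
      by_cases hjI : j ∈ I
      · have hset : I \ S.erase j = insert j (I \ S) := by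
          ext x
          simp only [Finset.mem_sdiff, Finset.mem_erase, Finset.mem_insert, not_and]
          constructor
          · rintro ⟨hxI, hx⟩
            by_cases hxj : x = j
            · exact Or.inl hxj
            · exact Or.inr ⟨hxI, fun hxS => absurd (hx hxj) (fun h' => h' hxS)⟩
          · rintro (rfl | ⟨hxI, hxS⟩)
            · exact ⟨hjI, fun h' => absurd rfl h'⟩
            · exact ⟨hxI, fun _ h' => hxS h'⟩
        rw [hset, Finset.sum_insert (by simp [hj] : j ∉ I \ S),
          Finset.insert_erase hj, if_pos hjI]
      · have hset : I \ S.erase j = I \ S := by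
          ext x
          simp only [Finset.mem_sdiff, Finset.mem_erase]
          constructor
          · rintro ⟨hxI, hx⟩
            refine ⟨hxI, fun hxS => hx ⟨fun e => hjI (e ▸ hxI), hxS⟩⟩
          · rintro ⟨hxI, hxS⟩
            exact ⟨hxI, fun h' => hxS h'.2⟩
        rw [hset, if_neg hjI, zero_add]
    rw [Finset.sum_congr rfl key2, Finset.sum_add_distrib, Finset.sum_ite_mem,
      Finset.sum_const, hS]
  rw [hL, hR, hcard, Finset.sum_comm]
  rw [← natCast_zsmul z (m - h), ← natCast_zsmul z h, Nat.cast_sub hhm]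
  have harith : ((m : ℤ) - h) = (h : ℤ) - (2 * h - m) := by ring
  rw [harith, sub_smul]
  abel

/-- if every subset in the support of `y` meets `I` in exactly `h`
elements and `|I| = m`, then `(y)δ_I φ = (y)φ δ_I − (2h − m)·y` (maps applied on the
right, so `(y)δ_I φ = φ(δ_I(y))` etc.). -/
theorem delta_phi_commutator (n : ℕ) (F : Type) [Field F] (I : Finset (Fin n))
    (h m : ℕ) (hI : I.card = m) (y : Finset (Fin n) →₀ F)
    (hy : ∀ S ∈ y.support, (S ∩ I).card = h) :
    phi n F (deltaI n F I y) = deltaI n F I (phi n F y) - (2 * (h : ℤ) - (m : ℤ)) • y := by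
  conv_lhs => rw [← Finsupp.sum_single y]
  conv_rhs => rw [← Finsupp.sum_single y]
  simp only [Finsupp.sum, map_sum, Finset.smul_sum, ← Finset.sum_sub_distrib]
  exact Finset.sum_congr rfl fun S hSs => key n F I h m hI S (y S) (hy S hSs)
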